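/- Let (X_t) be a continuous-time simple symmetric random walk on ℤ with generator (1/2)Δ. For every λ ∈ ℝ and T > 0 there exists C(λ,T) such that for all n ∈ ℕ, k ∈ ℤ, t ∈ [0,T], E[exp(-λ|X_{n²t} + k|/n)] ≤ C(λ,T) exp(-λ|k|/n). -/

import Mathlib

/-! Conditioning on the number `m` of jumps, the binomial theorem gives
`∑ₓ P(Sₘ = x) e^{μx} = cosh μ ^ m`, and summing against the Poisson weights (Tonelli for
non-negative terms) yields the exact exponential moment `∑ₓ p_s(x) e^{μx} = exp (s (cosh μ - 1))`.
Since `e^{μ|x|} ≤ e^{μx} + e^{-μx}` and `-λ|x + k| ≤ -λ|k| + |λ||x|`, the rescaled quantity is at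
most `2 exp (n²t (cosh (λ/n) - 1)) e^{-λ|k|/n}`. Comparing the power series of `cosh` term by
term, `n² (cosh (λ/n) - 1) ≤ cosh λ - 1`, so `C = 2 exp (T (cosh λ - 1))` works. -/

open MeasureTheory Set

/-- Number of nearest-neighbour paths of length `m` on `ℤ` from `0` to `x`. -/
def pathCount (m : ℕ) (x : ℤ) : ℕ :=
  if ((m : ℤ) + x) % 2 = 0 ∧ x.natAbs ≤ m then Nat.choose m (((m : ℤ) + x).toNat / 2) else 0

/-- Transition kernel of the rate-1 continuous-time simple symmetric random walk on `ℤ`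
(generator `(1/2)Δ`): `^dp_t(x) = P₀(X_t = x) = e^{-t} Σ_m (t^m/m!) P(S_m = x)`. -/
noncomputable def srwKernel (t : ℝ) (x : ℤ) : ℝ :=
  Real.exp (-t) * ∑' m : ℕ, t ^ m / (m.factorial : ℝ) * (pathCount m x : ℝ) / 2 ^ m

open Real

theorem pathCount_eq_zero_of_notMem {m : ℕ} {x : ℤ}
    (hx : x ∉ (Finset.range (m + 1)).image (fun j : ℕ => 2 * (j : ℤ) - m)) :
    pathCount m x = 0 := by
  unfold pathCount
  split_ifs with hc
  · exact absurd (Finset.mem_image.mpr ⟨((m : ℤ) + x).toNat / 2,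
      Finset.mem_range.mpr (by omega), by omega⟩) hx
  · rfl

theorem pathCount_two_mul_sub {m j : ℕ} (hj : j ≤ m) :
    pathCount m (2 * (j : ℤ) - m) = m.choose j := by
  unfold pathCount
  rw [if_pos ⟨by omega, by omega⟩]
  congr 1
  omega

theorem hasSum_pathCount_div_mul_exp (m : ℕ) (μ : ℝ) :
    HasSum (fun x : ℤ => (pathCount m x : ℝ) / 2 ^ m * exp (μ * x)) (cosh μ ^ m) := by
  set S := (Finset.range (m + 1)).image (fun j : ℕ => 2 * (j : ℤ) - m)
  suffices ∑ x ∈ S, (pathCount m x : ℝ) / 2 ^ m * exp (μ * x) = cosh μ ^ m from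
    this ▸ hasSum_sum_of_ne_finset_zero fun x hx => by
      rw [pathCount_eq_zero_of_notMem hx, Nat.cast_zero, zero_div, zero_mul]
  rw [Finset.sum_image (fun a _ b _ hab => by omega), cosh_eq, div_pow, add_pow, Finset.sum_div]
  refine Finset.sum_congr rfl fun j hj => ?_
  have hjm : j ≤ m := Nat.lt_succ_iff.mp (Finset.mem_range.mp hj)
  rw [pathCount_two_mul_sub hjm, ← exp_nat_mul, ← exp_nat_mul, ← exp_add]
  push_cast [hjm]
  ring_nf

theorem hasSum_tsum_comm_of_nonneg {β γ : Type*} {g : β → γ → ℝ} (hg : ∀ b c, 0 ≤ g b c)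
    {r : β → ℝ} {a : ℝ} (hr : ∀ b, HasSum (g b) (r b)) (ha : HasSum r a) :
    HasSum (fun c => ∑' b, g b c) a := by
  have hsum : Summable (Function.uncurry g) :=
    (summable_prod_of_nonneg fun p => hg p.1 p.2).mpr
      ⟨fun b => (hr b).summable, by simpa only [(hr _).tsum_eq] using ha.summable⟩
  have htot : HasSum (Function.uncurry g) a :=
    ha.unique (hsum.hasSum.prod_fiberwise hr) ▸ hsum.hasSum
  have hswap := (Equiv.prodComm γ β).hasSum_iff.mpr htot
  exact hswap.prod_fiberwise fun c => (hswap.summable.prod_factor c).hasSum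

theorem hasSum_srwKernel_mul_exp {s : ℝ} (hs : 0 ≤ s) (μ : ℝ) :
    HasSum (fun x : ℤ => srwKernel s x * exp (μ * x)) (exp (s * (cosh μ - 1))) := by
  have hrows (m : ℕ) := (hasSum_pathCount_div_mul_exp m μ).mul_left (s ^ m / m.factorial)
  have hexp : HasSum (fun m : ℕ => s ^ m / m.factorial * cosh μ ^ m) (exp (s * cosh μ)) := by
    simpa only [exp_eq_exp_ℝ, mul_pow, div_mul_eq_mul_div, mul_comm]
      using NormedSpace.expSeries_div_hasSum_exp (s * cosh μ)
  have hkernel : (fun x : ℤ => srwKernel s x * exp (μ * x)) =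
      fun x => exp (-s) *
        ∑' m : ℕ, s ^ m / m.factorial * ((pathCount m x : ℝ) / 2 ^ m * exp (μ * x)) := by
    funext x
    rw [srwKernel, mul_assoc, ← tsum_mul_right]
    congr 2 with m
    ring
  rw [hkernel, show s * (cosh μ - 1) = -s + s * cosh μ by ring, exp_add]
  exact (hasSum_tsum_comm_of_nonneg (fun m x => by positivity) hrows hexp).mul_left _

theorem srwKernel_nonneg {s : ℝ} (hs : 0 ≤ s) (x : ℤ) : 0 ≤ srwKernel s x :=
  mul_nonneg (exp_pos _).le (tsum_nonneg fun m => by positivity)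

theorem exp_mul_abs_le_exp_add_exp (μ x : ℝ) : exp (μ * |x|) ≤ exp (μ * x) + exp (-μ * x) := by
  rcases abs_choice x with h | h <;> rw [h]
  · exact le_add_of_nonneg_right (exp_pos _).le
  · rw [mul_neg, ← neg_mul]
    exact le_add_of_nonneg_left (exp_pos _).le

theorem tsum_srwKernel_mul_le {s : ℝ} (hs : 0 ≤ s) {f : ℤ → ℝ} {c μ : ℝ} (hf0 : 0 ≤ f)
    (hf : ∀ x : ℤ, f x ≤ c * exp (μ * |(x : ℝ)|)) :
    ∑' x, srwKernel s x * f x ≤ 2 * c * exp (s * (cosh μ - 1)) := by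
  have hc : 0 ≤ c := by simpa using (hf0 0).trans (hf 0)
  have hdom := ((hasSum_srwKernel_mul_exp hs μ).add (hasSum_srwKernel_mul_exp hs (-μ))).mul_left c
  rw [cosh_neg] at hdom
  have hle (x : ℤ) : srwKernel s x * f x ≤
      c * (srwKernel s x * exp (μ * x) + srwKernel s x * exp (-μ * x)) := by
    calc srwKernel s x * f x ≤ srwKernel s x * (c * exp (μ * |(x : ℝ)|)) :=
          mul_le_mul_of_nonneg_left (hf x) (srwKernel_nonneg hs x)
      _ ≤ srwKernel s x * (c * (exp (μ * x) + exp (-μ * x))) := by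
          gcongr
          · exact srwKernel_nonneg hs x
          · exact exp_mul_abs_le_exp_add_exp μ x
      _ = _ := by ring
  have hsum : Summable fun x => srwKernel s x * f x :=
    hdom.summable.of_nonneg_of_le (fun x => mul_nonneg (srwKernel_nonneg hs x) (hf0 x)) hle
  linarith [hasSum_le hle hsum.hasSum hdom]

theorem sq_mul_cosh_div_sub_one_le (r : ℝ) {c : ℝ} (hc : 1 ≤ c) :
    c ^ 2 * (cosh (r / c) - 1) ≤ cosh r - 1 := by
  have hdiff := ((hasSum_cosh (r / c)).mul_left (c ^ 2)).sub (hasSum_cosh r)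
  have hterm (n : ℕ) :
      c ^ 2 * ((r / c) ^ (2 * n) / (2 * n).factorial) - r ^ (2 * n) / (2 * n).factorial ≤
        (Pi.single 0 (c ^ 2 - 1) : ℕ → ℝ) n := by
    rcases n.eq_zero_or_pos with rfl | hn
    · simp
    · have hc2 : c ^ 2 ≤ c ^ (2 * n) := pow_le_pow_right₀ hc (by omega)
      have hpow : c ^ 2 * (r / c) ^ (2 * n) ≤ r ^ (2 * n) := by
        rw [div_pow, mul_div_assoc', div_le_iff₀ (by positivity), mul_comm]
        exact mul_le_mul_of_nonneg_left hc2 (by rw [pow_mul]; positivity)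
      rw [Pi.single_eq_of_ne hn.ne', sub_nonpos, mul_div_assoc']
      exact div_le_div_of_nonneg_right hpow (by positivity)
  linarith [hasSum_le hterm hdiff (hasSum_pi_single 0 (c ^ 2 - 1))]

theorem neg_mul_abs_add_le (a y k : ℝ) : -a * |y + k| ≤ -a * |k| + |a| * |y| := by
  have h := abs_abs_sub_abs_le_abs_sub (y + k) k
  rw [add_sub_cancel_right] at h
  nlinarith [neg_le_abs (a * (|y + k| - |k|)), abs_mul a (|y + k| - |k|),
    mul_le_mul_of_nonneg_left h (abs_nonneg a)]

theorem srw_rescaled_exp_upper_bound_general (lam T : ℝ) :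
    ∃ C : ℝ, ∀ n : ℕ, 0 < n → ∀ k : ℤ, ∀ t ∈ Icc (0 : ℝ) T,
      (∑' x : ℤ, srwKernel ((n : ℝ) ^ 2 * t) x * Real.exp (-lam * |(x : ℝ) + (k : ℝ)| / n))
        ≤ C * Real.exp (-lam * |(k : ℝ)| / n) := by
  refine ⟨2 * exp (T * (cosh lam - 1)), fun n hn k t ht => ?_⟩
  have hn1 : (1 : ℝ) ≤ n := by exact_mod_cast hn
  have hshift (x : ℤ) : exp (-lam * |(x : ℝ) + k| / n) ≤
      exp (-lam * |(k : ℝ)| / n) * exp (|lam| / n * |(x : ℝ)|) := by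
    rw [← exp_add, exp_le_exp, show -lam * |(k : ℝ)| / n + |lam| / n * |(x : ℝ)| =
      (-lam * |(k : ℝ)| + |lam| * |(x : ℝ)|) / n by ring]
    exact div_le_div_of_nonneg_right (neg_mul_abs_add_le lam x k) (by positivity)
  have hexponent : (n : ℝ) ^ 2 * t * (cosh (|lam| / n) - 1) ≤ T * (cosh lam - 1) :=
    calc (n : ℝ) ^ 2 * t * (cosh (|lam| / n) - 1)
        = t * (n ^ 2 * (cosh (|lam| / n) - 1)) := by ring
      _ ≤ t * (cosh lam - 1) := by
        rw [← cosh_abs lam]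
        exact mul_le_mul_of_nonneg_left (sq_mul_cosh_div_sub_one_le _ hn1) ht.1
      _ ≤ T * (cosh lam - 1) := mul_le_mul_of_nonneg_right ht.2 (by linarith [one_le_cosh lam])
  calc _ ≤ 2 * exp (-lam * |(k : ℝ)| / n) * exp ((n : ℝ) ^ 2 * t * (cosh (|lam| / n) - 1)) :=
        tsum_srwKernel_mul_le (by have := ht.1; positivity) (fun x => (exp_pos _).le) hshift
    _ ≤ 2 * exp (T * (cosh lam - 1)) * exp (-lam * |(k : ℝ)| / n) := by
        rw [mul_right_comm]
        gcongr

/-- Uniform upper bound under diffusive rescaling: for `λ ∈ ℝ` and `T > 0` there is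
`C(λ,T)` with `E[exp(-λ|X_{n²t}+k|/n)] ≤ C(λ,T) exp(-λ|k|/n)` for all `n ≥ 1`, `k ∈ ℤ`,
`t ∈ [0,T]`. -/
theorem srw_rescaled_exp_upper_bound (lam T : ℝ) (hT : 0 < T) :
    ∃ C : ℝ, ∀ n : ℕ, 0 < n → ∀ k : ℤ, ∀ t ∈ Icc (0 : ℝ) T,
      (∑' x : ℤ, srwKernel ((n : ℝ) ^ 2 * t) x * Real.exp (-lam * |(x : ℝ) + (k : ℝ)| / n))
        ≤ C * Real.exp (-lam * |(k : ℝ)| / n) :=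
  srw_rescaled_exp_upper_bound_general lam T
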